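/- arXiv:2303.09900 — 3 statements merged into one kernel-verified Lean document; each statement's English description precedes it below -/
import Mathlib

section
/- Uniqueness of the Bruhat decomposition: let X be an r×2m matrix and Y ∈ GL_r(F). Suppose m_1 ∈ GL_r(F), m_2 ∈ GL_{2m}(F), X' and X_1 are r×2m matrices, and Y' and Y_1 are r×r matrices such that ẇ_0^{-1} n(X,Y) = diag(m_1, m_2, θ_r(m_1)) · n(X',Y') · n̄(X_1,Y_1). Then necessarily m_1 = θ_r(Y), Y' = (−1)^r θ_r(Y)^{-1}, X' = (−1)^{r−1} θ_r(Y^{-1}) Y^{-1} X, Y_1 = (−1)^r Y^{-1}, X_1 = (−1)^r Y^{-1} X, the matrix S(X,Y) is invertible, and m_2 = S(X,Y)^{-1}. -/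
open Matrix

namespace RS

variable (F : Type*) [Field F]

/-- The matrix `J_k`: its `(i, k+1-i)` entry (1-indexed) is `(-1)^(i-1)`, i.e. in 0-indexed
terms the `(i,j)` entry is `(-1)^i` when `i + j = k - 1`, and all other entries are `0`. -/
def Jmat (k : ℕ) : Matrix (Fin k) (Fin k) F :=
  Matrix.of fun i j => if (i : ℕ) + (j : ℕ) = k - 1 then (-1 : F) ^ (i : ℕ) else 0

/-- A 2×2 block matrix with blocks of sizes `a, b` (rows) and `c, d` (columns), realized on
`Fin (a+b) × Fin (c+d)`. -/
def blk2 {a b c d : ℕ} (A : Matrix (Fin a) (Fin c) F) (B : Matrix (Fin a) (Fin d) F)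
    (C : Matrix (Fin b) (Fin c) F) (D : Matrix (Fin b) (Fin d) F) :
    Matrix (Fin (a + b)) (Fin (c + d)) F :=
  Matrix.of fun i j =>
    if hi : (i : ℕ) < a then
      if hj : (j : ℕ) < c then A ⟨(i : ℕ), hi⟩ ⟨(j : ℕ), hj⟩
      else B ⟨(i : ℕ), hi⟩ ⟨(j : ℕ) - c, by have := j.isLt; omega⟩
    else
      if hj : (j : ℕ) < c then C ⟨(i : ℕ) - a, by have := i.isLt; omega⟩ ⟨(j : ℕ), hj⟩
      else D ⟨(i : ℕ) - a, by have := i.isLt; omega⟩ ⟨(j : ℕ) - c, by have := j.isLt; omega⟩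

/-- A 3×3 block (square) matrix with blocks of sizes `a, b, c`, realized on `Fin (a+b+c)`. -/
def blk3 {a b c : ℕ}
    (A11 : Matrix (Fin a) (Fin a) F) (A12 : Matrix (Fin a) (Fin b) F)
    (A13 : Matrix (Fin a) (Fin c) F)
    (A21 : Matrix (Fin b) (Fin a) F) (A22 : Matrix (Fin b) (Fin b) F)
    (A23 : Matrix (Fin b) (Fin c) F)
    (A31 : Matrix (Fin c) (Fin a) F) (A32 : Matrix (Fin c) (Fin b) F)
    (A33 : Matrix (Fin c) (Fin c) F) :
    Matrix (Fin (a + b + c)) (Fin (a + b + c)) F :=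
  Matrix.of fun i j =>
    if hi1 : (i : ℕ) < a then
      if hj1 : (j : ℕ) < a then A11 ⟨(i : ℕ), hi1⟩ ⟨(j : ℕ), hj1⟩
      else if hj2 : (j : ℕ) < a + b then A12 ⟨(i : ℕ), hi1⟩ ⟨(j : ℕ) - a, by omega⟩
      else A13 ⟨(i : ℕ), hi1⟩ ⟨(j : ℕ) - (a + b), by have := j.isLt; omega⟩
    else if hi2 : (i : ℕ) < a + b then
      if hj1 : (j : ℕ) < a then A21 ⟨(i : ℕ) - a, by omega⟩ ⟨(j : ℕ), hj1⟩
      else if hj2 : (j : ℕ) < a + b then A22 ⟨(i : ℕ) - a, by omega⟩ ⟨(j : ℕ) - a, by omega⟩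
      else A23 ⟨(i : ℕ) - a, by omega⟩ ⟨(j : ℕ) - (a + b), by have := j.isLt; omega⟩
    else
      if hj1 : (j : ℕ) < a then A31 ⟨(i : ℕ) - (a + b), by have := i.isLt; omega⟩ ⟨(j : ℕ), hj1⟩
      else if hj2 : (j : ℕ) < a + b then
        A32 ⟨(i : ℕ) - (a + b), by have := i.isLt; omega⟩ ⟨(j : ℕ) - a, by omega⟩
      else A33 ⟨(i : ℕ) - (a + b), by have := i.isLt; omega⟩
        ⟨(j : ℕ) - (a + b), by have := j.isLt; omega⟩

/-- `J'_{2k}`, the `2k×2k` block matrix `[[0, J_k], [-J_kᵀ, 0]]`. -/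
def Jp (k : ℕ) : Matrix (Fin (k + k)) (Fin (k + k)) F :=
  blk2 F 0 (Jmat F k) (-(Jmat F k)ᵀ) 0

/-- `Sp_{2N}(F) = {h ∈ GL_{2N}(F) : hᵀ J'_{2N} h = J'_{2N}}`. -/
def Sp (N : ℕ) : Set (Matrix (Fin (N + N)) (Fin (N + N)) F) :=
  {h | IsUnit h ∧ hᵀ * Jp F N * h = Jp F N}

/-- `θ_r(g) = J_r (g⁻¹)ᵀ J_r⁻¹`. -/
noncomputable def theta (r : ℕ) (g : Matrix (Fin r) (Fin r) F) : Matrix (Fin r) (Fin r) F :=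
  Jmat F r * (g⁻¹)ᵀ * (Jmat F r)⁻¹

/-- `θ_{r,m}(X) = (-1)^r J'_{2m} Xᵀ J_r`. -/
def thetaRM (r m : ℕ) (X : Matrix (Fin r) (Fin (m + m)) F) : Matrix (Fin (m + m)) (Fin r) F :=
  (-1 : F) ^ r • (Jp F m * Xᵀ * Jmat F r)

/-- `n(X,Y) = [[I_r, X, Y], [0, I_{2m}, θ_{r,m}(X)], [0, 0, I_r]]` (block sizes `r, 2m, r`). -/
def nMat (r m : ℕ) (X : Matrix (Fin r) (Fin (m + m)) F) (Y : Matrix (Fin r) (Fin r) F) :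
    Matrix (Fin (r + (m + m) + r)) (Fin (r + (m + m) + r)) F :=
  blk3 F 1 X Y 0 1 (thetaRM F r m X) 0 0 1

/-- `n̄(X,Y) = [[I_r, 0, 0], [(-1)^r J'_{2m} Xᵀ J_r, I_{2m}, 0], [(-1)^r Y, (-1)^r X, I_r]]`. -/
def nbarMat (r m : ℕ) (X : Matrix (Fin r) (Fin (m + m)) F) (Y : Matrix (Fin r) (Fin r) F) :
    Matrix (Fin (r + (m + m) + r)) (Fin (r + (m + m) + r)) F :=
  blk3 F 1 0 0 ((-1 : F) ^ r • (Jp F m * Xᵀ * Jmat F r)) 1 0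
    ((-1 : F) ^ r • Y) ((-1 : F) ^ r • X) 1

/-- `ẇ_0 = [[0, 0, I_r], [0, I_{2m}, 0], [(-1)^r I_r, 0, 0]]`. -/
def w0 (r m : ℕ) : Matrix (Fin (r + (m + m) + r)) (Fin (r + (m + m) + r)) F :=
  blk3 F 0 0 1 0 1 0 ((-1 : F) ^ r • (1 : Matrix (Fin r) (Fin r) F)) 0 0

/-- `S(X,Y) = I_{2m} - J'_{2m} Xᵀ (Y⁻¹)ᵀ J_r X`. -/
noncomputable def Smat (r m : ℕ) (X : Matrix (Fin r) (Fin (m + m)) F) (Y : Matrix (Fin r) (Fin r) F) :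
    Matrix (Fin (m + m)) (Fin (m + m)) F :=
  1 - Jp F m * Xᵀ * (Y⁻¹)ᵀ * Jmat F r * X

/-- The block diagonal matrix `diag(m₁, m₂, θ_r(m₁))`. -/
noncomputable def levi (r m : ℕ) (m1 : Matrix (Fin r) (Fin r) F)
    (m2 : Matrix (Fin (m + m)) (Fin (m + m)) F) :
    Matrix (Fin (r + (m + m) + r)) (Fin (r + (m + m) + r)) F :=
  blk3 F m1 0 0 0 m2 0 0 0 (theta F r m1)

/-- `m(X,Y) = diag(θ_r(Y), S(X,Y)⁻¹, Y)`. -/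
noncomputable def mMat (r m : ℕ) (X : Matrix (Fin r) (Fin (m + m)) F) (Y : Matrix (Fin r) (Fin r) F) :
    Matrix (Fin (r + (m + m) + r)) (Fin (r + (m + m) + r)) F :=
  blk3 F (theta F r Y) 0 0 0 (Smat F r m X Y)⁻¹ 0 0 0 Y

/-- `α^∨(t) = diag(t·I_r, I_{2m}, t⁻¹·I_r)`. -/
def coroot (r m : ℕ) (t : Fˣ) :
    Matrix (Fin (r + (m + m) + r)) (Fin (r + (m + m) + r)) F :=
  blk3 F ((t : F) • (1 : Matrix (Fin r) (Fin r) F)) 0 0 0 1 0 0 0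
    (((t⁻¹ : Fˣ) : F) • (1 : Matrix (Fin r) (Fin r) F))

/-- Transport of a `2n×2n` matrix written with block sizes `(r, 2m, r)` to the canonical
index type `Fin ((r+m)+(r+m))` (where `n = r + m`), along the obvious cast. -/
def toSp (r m : ℕ) (M : Matrix (Fin (r + (m + m) + r)) (Fin (r + (m + m) + r)) F) :
    Matrix (Fin ((r + m) + (r + m))) (Fin ((r + m) + (r + m))) F :=
  Matrix.reindex (finCongr (by omega)) (finCongr (by omega)) M

/-- Upper-triangular unipotent matrices. -/
def UTU {k : ℕ} (u : Matrix (Fin k) (Fin k) F) : Prop :=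
  (∀ i, u i i = 1) ∧ ∀ i j : Fin k, (j : ℕ) < (i : ℕ) → u i j = 0

/-- A row vector as a `1 × k` matrix. -/
def rowVec {k : ℕ} (v : Fin k → F) : Matrix (Fin 1) (Fin k) F := Matrix.of fun _ j => v j

/-- A column vector as a `k × 1` matrix. -/
def colVec {k : ℕ} (v : Fin k → F) : Matrix (Fin k) (Fin 1) F := Matrix.of fun i _ => v i

/-- A scalar as a `1 × 1` matrix. -/
def scMat (x : F) : Matrix (Fin 1) (Fin 1) F := Matrix.of fun _ _ => x

/-- `Y_i`: the lower-left `i×i` corner submatrix of `Y` (rows `r-i+1,…,r`, columns `1,…,i`,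
1-indexed). -/
def llCorner (r : ℕ) (Y : Matrix (Fin r) (Fin r) F) (i : ℕ) (h : i ≤ r) :
    Matrix (Fin i) (Fin i) F :=
  Matrix.of fun a b =>
    Y ⟨r - i + (a : ℕ), by have := a.isLt; omega⟩ ⟨(b : ℕ), by have := b.isLt; omega⟩

/-- `Y^{(r-1)}`: the upper-right `(r-1)×(r-1)` corner submatrix of `Y` (rows `1,…,r-1`,
columns `2,…,r`, 1-indexed). -/
def urCorner (r : ℕ) (Y : Matrix (Fin r) (Fin r) F) :
    Matrix (Fin (r - 1)) (Fin (r - 1)) F :=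
  Matrix.of fun a b =>
    Y ⟨(a : ℕ), by have := a.isLt; omega⟩ ⟨(b : ℕ) + 1, by have := b.isLt; omega⟩

/-- `J₀`: the central `(2m-2)×(2m-2)` submatrix of `J'_{2m}` (rows and columns `2,…,2m-1`). -/
def J0 (m : ℕ) : Matrix (Fin (m + m - 2)) (Fin (m + m - 2)) F :=
  Matrix.of fun i j =>
    Jp F m ⟨(i : ℕ) + 1, by have := i.isLt; omega⟩ ⟨(j : ℕ) + 1, by have := j.isLt; omega⟩

/-- `diag(t₁,…,t_n, t_n⁻¹,…,t₁⁻¹)` (with `n = r + m`), realized on the index type with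
block sizes `(r, 2m, r)`. -/
def torus (r m : ℕ) (t : Fin (r + m) → Fˣ) :
    Matrix (Fin (r + (m + m) + r)) (Fin (r + (m + m) + r)) F :=
  Matrix.diagonal fun i =>
    if h : (i : ℕ) < r + m then ((t ⟨(i : ℕ), h⟩ : Fˣ) : F)
    else (((t ⟨r + (m + m) + r - 1 - (i : ℕ), by have := i.isLt; omega⟩)⁻¹ : Fˣ) : F)

/-- `Y_{i,j}`: the `(j-1)×(j-1)` submatrix of `Y` on the rows `{r-j+1,…,r} \ {r-i+1}` and the
columns `1,…,j-1` (all 1-indexed). -/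
def subDelRow (r : ℕ) (Y : Matrix (Fin r) (Fin r) F) (i j : ℕ)
    (hi : 1 ≤ i) (hij : i < j) (hj : j ≤ r) : Matrix (Fin (j - 1)) (Fin (j - 1)) F :=
  Matrix.of fun a b =>
    Y (if h : r - j + (a : ℕ) < r - i then
          (⟨r - j + (a : ℕ), by have := a.isLt; omega⟩ : Fin r)
        else (⟨r - j + (a : ℕ) + 1, by have := a.isLt; omega⟩ : Fin r))
      ⟨(b : ℕ), by have := b.isLt; omega⟩

/-- `Y'_{i,j}`: the `(r-i)×(r-i)` submatrix of `Y` on the rows `i+1,…,r` and the columns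
`{1,…,r-i+1} \ {r-j+1}` (all 1-indexed). -/
def subDelCol (r : ℕ) (Y : Matrix (Fin r) (Fin r) F) (i j : ℕ)
    (hi : 1 ≤ i) (hij : i < j) (hj : j ≤ r) : Matrix (Fin (r - i)) (Fin (r - i)) F :=
  Matrix.of fun a b =>
    Y ⟨i + (a : ℕ), by have := a.isLt; omega⟩
      (if h : (b : ℕ) < r - j then (⟨(b : ℕ), by have := b.isLt; omega⟩ : Fin r)
        else (⟨(b : ℕ) + 1, by have := b.isLt; omega⟩ : Fin r))


/-!
Both sides of the decomposition are `3 × 3` block matrices (block sizes `r, 2m, r`); comparing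
blocks gives `θ_r(m₁) = Y`, `θ_r(m₁) (-1)^r Y₁ = 1`, `θ_r(m₁) (-1)^r X₁ = X` (bottom row),
`m₁ Y' = (-1)^r`, `m₁ X' + m₁ Y' (-1)^r X₁ = 0` (top row) and
`m₂ (1 + θ_{r,m}(X') (-1)^r X₁) = 1` (centre). These are solved one after the other. Since `J_r`
is orthogonal with `J_rᵀ = ±J_r`, `θ_r` is a multiplicative involution and
`θ_{r,m}(θ_r(g) X) = θ_{r,m}(X) g⁻¹`; this identifies the centre factor with `S(X,Y)`.
-/

section Signs

variable {R M : Type*} [Ring R] [AddCommGroup M] [Module R M]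

lemma neg_one_pow_mul_neg_one_pow (n : ℕ) : (-1 : R) ^ n * (-1) ^ n = 1 := by
  rw [← pow_add, ← two_mul, pow_mul, neg_one_sq, one_pow]

lemma neg_one_pow_smul_neg_one_pow_smul (n : ℕ) (x : M) : (-1 : R) ^ n • (-1 : R) ^ n • x = x := by
  rw [smul_smul, neg_one_pow_mul_neg_one_pow, one_smul]

lemma neg_neg_one_pow_eq_neg_one_pow_sub_one {n : ℕ} (hn : 1 ≤ n) :
    -(-1 : R) ^ n = (-1) ^ (n - 1) := by
  obtain ⟨k, rfl⟩ := Nat.exists_eq_add_of_le' hn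
  simp [pow_succ]

end Signs

section Blocks

variable {α : Type*} {a b c : ℕ}
  {A₁₁ : Matrix (Fin a) (Fin a) α} {A₁₂ : Matrix (Fin a) (Fin b) α} {A₁₃ : Matrix (Fin a) (Fin c) α}
  {A₂₁ : Matrix (Fin b) (Fin a) α} {A₂₂ : Matrix (Fin b) (Fin b) α} {A₂₃ : Matrix (Fin b) (Fin c) α}
  {A₃₁ : Matrix (Fin c) (Fin a) α} {A₃₂ : Matrix (Fin c) (Fin b) α} {A₃₃ : Matrix (Fin c) (Fin c) α}
  {B₁₁ : Matrix (Fin a) (Fin a) α} {B₁₂ : Matrix (Fin a) (Fin b) α} {B₁₃ : Matrix (Fin a) (Fin c) α}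
  {B₂₁ : Matrix (Fin b) (Fin a) α} {B₂₂ : Matrix (Fin b) (Fin b) α} {B₂₃ : Matrix (Fin b) (Fin c) α}
  {B₃₁ : Matrix (Fin c) (Fin a) α} {B₃₂ : Matrix (Fin c) (Fin b) α} {B₃₃ : Matrix (Fin c) (Fin c) α}

local notation "blkA" => blk3 α A₁₁ A₁₂ A₁₃ A₂₁ A₂₂ A₂₃ A₃₁ A₃₂ A₃₃
local notation "blkB" => blk3 α B₁₁ B₁₂ B₁₃ B₂₁ B₂₂ B₂₃ B₃₁ B₃₂ B₃₃

@[simp] lemma blk3_apply₁₁ (i j : Fin a) :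
    blkA (Fin.castAdd c (Fin.castAdd b i)) (Fin.castAdd c (Fin.castAdd b j)) = A₁₁ i j := by
  simp [blk3]

@[simp] lemma blk3_apply₁₂ (i : Fin a) (j : Fin b) :
    blkA (Fin.castAdd c (Fin.castAdd b i)) (Fin.castAdd c (Fin.natAdd a j)) = A₁₂ i j := by
  simp [blk3]

@[simp] lemma blk3_apply₁₃ (i : Fin a) (j : Fin c) :
    blkA (Fin.castAdd c (Fin.castAdd b i)) (Fin.natAdd (a + b) j) = A₁₃ i j := by
  simp [blk3, add_assoc, add_tsub_add_eq_tsub_left]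

@[simp] lemma blk3_apply₂₁ (i : Fin b) (j : Fin a) :
    blkA (Fin.castAdd c (Fin.natAdd a i)) (Fin.castAdd c (Fin.castAdd b j)) = A₂₁ i j := by
  simp [blk3]

@[simp] lemma blk3_apply₂₂ (i j : Fin b) :
    blkA (Fin.castAdd c (Fin.natAdd a i)) (Fin.castAdd c (Fin.natAdd a j)) = A₂₂ i j := by
  simp [blk3]

@[simp] lemma blk3_apply₂₃ (i : Fin b) (j : Fin c) :
    blkA (Fin.castAdd c (Fin.natAdd a i)) (Fin.natAdd (a + b) j) = A₂₃ i j := by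
  simp [blk3, add_assoc, add_tsub_add_eq_tsub_left]

@[simp] lemma blk3_apply₃₁ (i : Fin c) (j : Fin a) :
    blkA (Fin.natAdd (a + b) i) (Fin.castAdd c (Fin.castAdd b j)) = A₃₁ i j := by
  simp [blk3, add_assoc, add_tsub_add_eq_tsub_left]

@[simp] lemma blk3_apply₃₂ (i : Fin c) (j : Fin b) :
    blkA (Fin.natAdd (a + b) i) (Fin.castAdd c (Fin.natAdd a j)) = A₃₂ i j := by
  simp [blk3, add_assoc, add_tsub_add_eq_tsub_left]

@[simp] lemma blk3_apply₃₃ (i j : Fin c) :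
    blkA (Fin.natAdd (a + b) i) (Fin.natAdd (a + b) j) = A₃₃ i j := by
  simp [blk3, add_assoc, add_tsub_add_eq_tsub_left]

lemma blk3_inj : blkA = blkB ↔
    A₁₁ = B₁₁ ∧ A₁₂ = B₁₂ ∧ A₁₃ = B₁₃ ∧ A₂₁ = B₂₁ ∧ A₂₂ = B₂₂ ∧ A₂₃ = B₂₃ ∧
      A₃₁ = B₃₁ ∧ A₃₂ = B₃₂ ∧ A₃₃ = B₃₃ := by
  refine ⟨fun h => ?_, by rintro ⟨rfl, rfl, rfl, rfl, rfl, rfl, rfl, rfl, rfl⟩; rfl⟩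
  refine ⟨?_, ?_, ?_, ?_, ?_, ?_, ?_, ?_, ?_⟩ <;> ext i j
  · simpa using congrFun₂ h (Fin.castAdd c (Fin.castAdd b i)) (Fin.castAdd c (Fin.castAdd b j))
  · simpa using congrFun₂ h (Fin.castAdd c (Fin.castAdd b i)) (Fin.castAdd c (Fin.natAdd a j))
  · simpa using congrFun₂ h (Fin.castAdd c (Fin.castAdd b i)) (Fin.natAdd (a + b) j)
  · simpa using congrFun₂ h (Fin.castAdd c (Fin.natAdd a i)) (Fin.castAdd c (Fin.castAdd b j))
  · simpa using congrFun₂ h (Fin.castAdd c (Fin.natAdd a i)) (Fin.castAdd c (Fin.natAdd a j))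
  · simpa using congrFun₂ h (Fin.castAdd c (Fin.natAdd a i)) (Fin.natAdd (a + b) j)
  · simpa using congrFun₂ h (Fin.natAdd (a + b) i) (Fin.castAdd c (Fin.castAdd b j))
  · simpa using congrFun₂ h (Fin.natAdd (a + b) i) (Fin.castAdd c (Fin.natAdd a j))
  · simpa using congrFun₂ h (Fin.natAdd (a + b) i) (Fin.natAdd (a + b) j)

lemma blk3_mul [NonUnitalNonAssocSemiring α] : blkA * blkB =
    blk3 α (A₁₁ * B₁₁ + A₁₂ * B₂₁ + A₁₃ * B₃₁) (A₁₁ * B₁₂ + A₁₂ * B₂₂ + A₁₃ * B₃₂)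
      (A₁₁ * B₁₃ + A₁₂ * B₂₃ + A₁₃ * B₃₃)
      (A₂₁ * B₁₁ + A₂₂ * B₂₁ + A₂₃ * B₃₁) (A₂₁ * B₁₂ + A₂₂ * B₂₂ + A₂₃ * B₃₂)
      (A₂₁ * B₁₃ + A₂₂ * B₂₃ + A₂₃ * B₃₃)
      (A₃₁ * B₁₁ + A₃₂ * B₂₁ + A₃₃ * B₃₁) (A₃₁ * B₁₂ + A₃₂ * B₂₂ + A₃₃ * B₃₂)
      (A₃₁ * B₁₃ + A₃₂ * B₂₃ + A₃₃ * B₃₃) := by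
  ext i j
  refine Fin.addCases (Fin.addCases (fun i => ?_) (fun i => ?_)) (fun i => ?_) i <;>
  refine Fin.addCases (Fin.addCases (fun j => ?_) (fun j => ?_)) (fun j => ?_) j <;>
  simp [mul_apply, Fin.sum_univ_add]

lemma blk3_one [Zero α] [One α] :
    blk3 α (1 : Matrix (Fin a) (Fin a) α) 0 0 0 (1 : Matrix (Fin b) (Fin b) α) 0 0 0
      (1 : Matrix (Fin c) (Fin c) α) = 1 := by
  ext i j
  refine Fin.addCases (Fin.addCases (fun i => ?_) (fun i => ?_)) (fun i => ?_) i <;>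
  refine Fin.addCases (Fin.addCases (fun j => ?_) (fun j => ?_)) (fun j => ?_) j <;>
  simp [one_apply, Fin.ext_iff] <;> omega

end Blocks

section Jmat

variable {F} {k : ℕ}

lemma Jmat_transpose : (Jmat F k)ᵀ = (-1 : F) ^ (k - 1) • Jmat F k := by
  ext i j
  simp only [transpose_apply, Jmat, of_apply, Matrix.smul_apply, smul_eq_mul, add_comm (j : ℕ)]
  split_ifs with h
  · rw [← h, pow_add, mul_right_comm, neg_one_pow_mul_neg_one_pow, one_mul]
  · rw [mul_zero]

lemma Jmat_transpose_mul_self : (Jmat F k)ᵀ * Jmat F k = 1 := by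
  ext i j
  rw [mul_apply, Finset.sum_eq_single (Fin.rev i)]
  · simp only [transpose_apply, Jmat, of_apply, one_apply, Fin.val_rev, Fin.ext_iff]
    have := i.isLt
    rw [if_pos (by omega)]
    split_ifs <;> first | omega | simp [neg_one_pow_mul_neg_one_pow]
  · intro l _ hl
    have : (l : ℕ) + i ≠ k - 1 := fun h => hl (by ext; simp; omega)
    simp [Jmat, this]
  · simp

lemma inv_Jmat : (Jmat F k)⁻¹ = (Jmat F k)ᵀ := inv_eq_left_inv Jmat_transpose_mul_self

lemma Jmat_mul_transpose_self : Jmat F k * (Jmat F k)ᵀ = 1 :=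
  mul_eq_one_comm.mp Jmat_transpose_mul_self

lemma Jmat_mul_self : Jmat F k * Jmat F k = (-1 : F) ^ (k - 1) • 1 := by
  have h := Jmat_transpose_mul_self (F := F) (k := k)
  rw [Jmat_transpose, smul_mul_assoc] at h
  rw [← h, neg_one_pow_smul_neg_one_pow_smul]

end Jmat

section Theta

variable {F} {r m : ℕ}

lemma theta_eq (g : Matrix (Fin r) (Fin r) F) :
    theta F r g = Jmat F r * (g⁻¹)ᵀ * (Jmat F r)ᵀ := by
  rw [theta, inv_Jmat]

lemma theta_one : theta F r 1 = 1 := by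
  rw [theta_eq, inv_one, transpose_one, Matrix.mul_one, Jmat_mul_transpose_self]

lemma theta_mul (g h : Matrix (Fin r) (Fin r) F) :
    theta F r (g * h) = theta F r g * theta F r h := by
  simp only [theta_eq, Matrix.mul_inv_rev, transpose_mul, Matrix.mul_assoc]
  rw [← Matrix.mul_assoc (Jmat F r)ᵀ, Jmat_transpose_mul_self, Matrix.one_mul]

lemma nonsing_inv_theta {g : Matrix (Fin r) (Fin r) F} (hg : IsUnit g) :
    (theta F r g)⁻¹ = theta F r g⁻¹ :=
  inv_eq_left_inv <| by
    rw [← theta_mul, nonsing_inv_mul _ ((isUnit_iff_isUnit_det g).mp hg), theta_one]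

lemma theta_theta {g : Matrix (Fin r) (Fin r) F} (hg : IsUnit g) :
    theta F r (theta F r g) = g := by
  rw [theta_eq, nonsing_inv_theta hg, theta_eq,
    nonsing_inv_nonsing_inv _ ((isUnit_iff_isUnit_det g).mp hg)]
  simp only [transpose_mul, transpose_transpose, Matrix.mul_assoc]
  rw [← transpose_mul, Jmat_mul_self, ← Matrix.mul_assoc, Jmat_mul_self]
  simp [neg_one_pow_smul_neg_one_pow_smul]

lemma thetaRM_neg (X : Matrix (Fin r) (Fin (m + m)) F) :
    thetaRM F r m (-X) = -thetaRM F r m X := by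
  simp [thetaRM]

lemma thetaRM_theta_mul (g : Matrix (Fin r) (Fin r) F) (X : Matrix (Fin r) (Fin (m + m)) F) :
    thetaRM F r m (theta F r g * X) = thetaRM F r m X * g⁻¹ := by
  simp only [thetaRM, theta_eq, transpose_mul, transpose_transpose, Matrix.smul_mul,
    Matrix.mul_assoc]
  rw [Jmat_transpose_mul_self, Matrix.mul_one]

end Theta

section Bruhat

variable {F} {r m : ℕ}

lemma inv_w0 : (w0 F r m)⁻¹ = blk3 F 0 0 ((-1 : F) ^ r • 1) 0 1 0 1 0 0 := by
  refine inv_eq_left_inv ?_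
  rw [w0, blk3_mul, ← blk3_one]
  simp [smul_smul, neg_one_pow_mul_neg_one_pow]

lemma inv_w0_mul_nMat (X : Matrix (Fin r) (Fin (m + m)) F) (Y : Matrix (Fin r) (Fin r) F) :
    (w0 F r m)⁻¹ * nMat F r m X Y =
      blk3 F 0 0 ((-1 : F) ^ r • 1) 0 1 (thetaRM F r m X) 1 X Y := by
  rw [inv_w0, nMat, blk3_mul]
  simp

lemma levi_mul_nMat_mul_nbarMat (m₁ : Matrix (Fin r) (Fin r) F)
    (m₂ : Matrix (Fin (m + m)) (Fin (m + m)) F) (X X₁ : Matrix (Fin r) (Fin (m + m)) F)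
    (Y Y₁ : Matrix (Fin r) (Fin r) F) :
    levi F r m m₁ m₂ * nMat F r m X Y * nbarMat F r m X₁ Y₁ =
      blk3 F (m₁ + m₁ * X * thetaRM F r m X₁ + m₁ * Y * ((-1 : F) ^ r • Y₁))
        (m₁ * X + m₁ * Y * ((-1 : F) ^ r • X₁)) (m₁ * Y)
        (m₂ * thetaRM F r m X₁ + m₂ * thetaRM F r m X * ((-1 : F) ^ r • Y₁))
        (m₂ + m₂ * thetaRM F r m X * ((-1 : F) ^ r • X₁)) (m₂ * thetaRM F r m X)
        (theta F r m₁ * ((-1 : F) ^ r • Y₁)) (theta F r m₁ * ((-1 : F) ^ r • X₁))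
        (theta F r m₁) := by
  simp only [levi, nMat, nbarMat, blk3_mul]
  congr 1 <;> simp [thetaRM]

lemma Smat_eq_one_sub_thetaRM_mul (X : Matrix (Fin r) (Fin (m + m)) F)
    (Y : Matrix (Fin r) (Fin r) F) :
    Smat F r m X Y = 1 - thetaRM F r m ((-1 : F) ^ r • (Y⁻¹ * X)) * X := by
  simp [Smat, thetaRM, transpose_mul, smul_smul, neg_one_pow_mul_neg_one_pow, Matrix.mul_assoc]

lemma mul_Smat_eq_one {X X₁ : Matrix (Fin r) (Fin (m + m)) F} {Y : Matrix (Fin r) (Fin r) F}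
    {m₂ : Matrix (Fin (m + m)) (Fin (m + m)) F} (hY : IsUnit Y)
    (hX₁ : (-1 : F) ^ r • X₁ = Y⁻¹ * X)
    (h : m₂ + m₂ * thetaRM F r m (-(theta F r Y⁻¹ * X₁)) * ((-1 : F) ^ r • X₁) = 1) :
    m₂ * Smat F r m X Y = 1 := by
  have hYdet := (isUnit_iff_isUnit_det Y).mp hY
  rw [thetaRM_neg, thetaRM_theta_mul, nonsing_inv_nonsing_inv _ hYdet, hX₁, Matrix.mul_assoc,
    Matrix.neg_mul, Matrix.mul_assoc, mul_nonsing_inv_cancel_left _ _ hYdet] at h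
  rw [Smat_eq_one_sub_thetaRM_mul, ← hX₁, neg_one_pow_smul_neg_one_pow_smul, Matrix.mul_sub,
    Matrix.mul_one, sub_eq_add_neg, ← Matrix.mul_neg, h]

end Bruhat

theorem bruhat_decomposition_unique (r m : ℕ) (hr : 1 ≤ r)
    (X : Matrix (Fin r) (Fin (m + m)) F) (Y : Matrix (Fin r) (Fin r) F) (hY : IsUnit Y)
    (m1 : Matrix (Fin r) (Fin r) F) (m2 : Matrix (Fin (m + m)) (Fin (m + m)) F)
    (hm1 : IsUnit m1)
    (X' X1 : Matrix (Fin r) (Fin (m + m)) F) (Y' Y1 : Matrix (Fin r) (Fin r) F)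
    (hdec : (w0 F r m)⁻¹ * nMat F r m X Y =
      levi F r m m1 m2 * nMat F r m X' Y' * nbarMat F r m X1 Y1) :
    m1 = theta F r Y ∧
    Y' = (-1 : F) ^ r • (theta F r Y)⁻¹ ∧
    X' = (-1 : F) ^ (r - 1) • (theta F r Y⁻¹ * (Y⁻¹ * X)) ∧
    Y1 = (-1 : F) ^ r • Y⁻¹ ∧
    X1 = (-1 : F) ^ r • (Y⁻¹ * X) ∧
    IsUnit (Smat F r m X Y) ∧
    m2 = (Smat F r m X Y)⁻¹ := by
  rw [inv_w0_mul_nMat, levi_mul_nMat_mul_nbarMat, blk3_inj] at hdec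
  obtain ⟨-, h₁₂, h₁₃, -, h₂₂, -, h₃₁, h₃₂, h₃₃⟩ := hdec
  have hm1det := (isUnit_iff_isUnit_det m1).mp hm1
  have hm1Y : m1 = theta F r Y := by rw [h₃₃, theta_theta hm1]
  have hY1 : (-1 : F) ^ r • Y1 = Y⁻¹ := (inv_eq_right_inv (h₃₃ ▸ h₃₁).symm).symm
  have hX1 : (-1 : F) ^ r • X1 = Y⁻¹ * X := by
    rw [h₃₂, ← h₃₃, nonsing_inv_mul_cancel_left _ _ ((isUnit_iff_isUnit_det Y).mp hY)]
  have hY' : Y' = (-1 : F) ^ r • m1⁻¹ := by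
    rw [← nonsing_inv_mul_cancel_left m1 Y' hm1det, ← h₁₃, mul_smul_comm, Matrix.mul_one]
  have hm1X' : m1 * X' = -X1 := by
    rw [← h₁₃, Matrix.smul_mul, Matrix.one_mul, neg_one_pow_smul_neg_one_pow_smul] at h₁₂
    exact eq_neg_of_add_eq_zero_left h₁₂.symm
  have hX' : X' = -(theta F r Y⁻¹ * X1) := by
    rw [← nonsing_inv_mul_cancel_left m1 X' hm1det, hm1X', hm1Y, nonsing_inv_theta hY,
      Matrix.mul_neg]
  have hS : m2 * Smat F r m X Y = 1 := mul_Smat_eq_one hY hX1 (hX' ▸ h₂₂.symm)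
  refine ⟨hm1Y, by rw [hY', hm1Y], ?_, ?_, ?_, IsUnit.of_mul_eq_one_right m2 hS,
    (inv_eq_left_inv hS).symm⟩
  · rw [hX', ← hX1, ← neg_neg_one_pow_eq_neg_one_pow_sub_one hr, Matrix.mul_smul, neg_smul,
      neg_one_pow_smul_neg_one_pow_smul]
  · rw [← hY1, neg_one_pow_smul_neg_one_pow_smul]
  · rw [← hX1, neg_one_pow_smul_neg_one_pow_smul]

end RS
end

section
/- Explicit second unipotent factor of the Bruhat decomposition: let Y ∈ GL_r(F) with det(Y_i) ≠ 0 for all 1 ≤ i ≤ r, and write (uniquely) θ_r(Y) = u_1 J_r t_1 u_2 with u_1, u_2 upper-triangular unipotent and t_1 invertible diagonal. For 1 ≤ i < j ≤ r let Y'_{i,j} denote the (r−i)×(r−i) submatrix of Y on the rows i+1,…,r and the columns {1, 2, …, r−i+1} \ {r−j+1}. Then (u_2)_{i,j} = det(Y'_{i,j})/det(Y_{r−i}) for all 1 ≤ i < j ≤ r. -/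
open Matrix

namespace RS

variable (F : Type*) [Field F]

/-!
Multiplying `θ_r(Y) = u₁ J D u₂` on the right by `J Yᵀ` (note `θ_r(Y) J Yᵀ = J`) gives
`D u₂ J Yᵀ = Jᵀ u₁⁻¹ J`, which is lower triangular. So row `i` of `u₂ J` is orthogonal to the rows
`i+1, …, r` of `Y`; as `u₂` is unipotent upper triangular, this row vanishes beyond column
`r-i+1` and has entry `±1` there. It is therefore a kernel vector of the `(r-i) × (r-i+1)` block
of `Y` on those rows and the first `r-i+1` columns, whose first `r-i` columns form the invertible
`Y_{r-i}`. That kernel is a line spanned by the vector of signed maximal minors, and comparing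
the two vectors coordinatewise gives the formula.
-/

section

variable {F}

theorem _root_.Fin.sum_univ_eq_sum_castLE {M : Type*} [AddCommMonoid M] {m n : ℕ} (h : m ≤ n)
    (f : Fin n → M) (hf : ∀ k : Fin n, m ≤ (k : ℕ) → f k = 0) :
    ∑ k, f k = ∑ c : Fin m, f (Fin.castLE h c) := by
  refine (Finset.sum_subset (Finset.subset_univ (Finset.univ.map (Fin.castLEEmb h)))
    fun k _ hk => hf k ?_).symm.trans (Finset.sum_map _ _ _)
  by_contra! hkm
  exact hk (Finset.mem_map.2 ⟨⟨k, hkm⟩, Finset.mem_univ _, rfl⟩)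

theorem Jmat_apply {r : ℕ} (a b : Fin r) :
    Jmat F r a b = if a.rev = b then (-1) ^ (a : ℕ) else 0 := by
  simp only [Jmat, of_apply, Fin.ext_iff, Fin.val_rev]
  congr 1
  have := a.isLt; have := b.isLt
  exact propext (by omega)

theorem Jmat_mul_apply {n : Type*} {r : ℕ} (M : Matrix (Fin r) n F) (a : Fin r) (b : n) :
    (Jmat F r * M) a b = (-1) ^ (a : ℕ) * M a.rev b := by
  simp [mul_apply, Jmat_apply]

theorem mul_Jmat_apply {m : Type*} {r : ℕ} (M : Matrix m (Fin r) F) (a : m) (b : Fin r) :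
    (M * Jmat F r) a b = (-1) ^ (b.rev : ℕ) * M a b.rev := by
  simp [mul_apply, Jmat_apply, Fin.rev_eq_iff, mul_comm]

theorem transpose_Jmat_mul_apply {n : Type*} {r : ℕ} (M : Matrix (Fin r) n F) (a : Fin r)
    (b : n) : ((Jmat F r)ᵀ * M) a b = (-1) ^ (a.rev : ℕ) * M a.rev b := by
  simp [mul_apply, Jmat_apply, Fin.rev_eq_iff]

variable (F) in
theorem Jmat_mul_transpose (r : ℕ) : Jmat F r * (Jmat F r)ᵀ = 1 := by
  ext a b
  simp only [Jmat_mul_apply, transpose_apply, Jmat_apply, one_apply, Fin.rev_inj]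
  split_ifs with h h' h'
  · rw [h', ← pow_add, ← two_mul, pow_mul, neg_one_sq, one_pow]
  · exact absurd h.symm h'
  · exact absurd h'.symm h
  · rw [mul_zero]

theorem isLowerTriangular_transpose_Jmat_mul_mul_Jmat {r : ℕ} {U : Matrix (Fin r) (Fin r) F}
    (hU : U.IsUpperTriangular) : ((Jmat F r)ᵀ * U * Jmat F r).IsLowerTriangular := by
  intro a b hab
  have hzero : U a.rev b.rev = 0 := hU (Fin.rev_lt_rev.2 hab)
  rw [mul_Jmat_apply, transpose_Jmat_mul_apply, hzero, mul_zero, mul_zero]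

theorem theta_mul_Jmat_mul_transpose {r : ℕ} {Y : Matrix (Fin r) (Fin r) F} (hY : IsUnit Y.det) :
    theta F r Y * (Jmat F r * Yᵀ) = Jmat F r := by
  have hJ : (Jmat F r)⁻¹ * Jmat F r = 1 :=
    (inv_eq_right_inv (Jmat_mul_transpose F r)) ▸ mul_eq_one_comm.1 (Jmat_mul_transpose F r)
  rw [theta, Matrix.mul_assoc, Matrix.mul_assoc, ← Matrix.mul_assoc _ (Jmat F r), hJ,
    Matrix.one_mul, ← transpose_mul, mul_nonsing_inv Y hY, transpose_one, Matrix.mul_one]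

theorem isLowerTriangular_mul_Jmat_mul_transpose_of_theta_eq {r : ℕ}
    {Y u₁ u₂ : Matrix (Fin r) (Fin r) F} {d : Fin r → F} (hY : IsUnit Y.det)
    (hu₁ : u₁.IsUpperTriangular) (hu₁' : IsUnit u₁.det) (hd : ∀ i, d i ≠ 0)
    (h : theta F r Y = u₁ * Jmat F r * diagonal d * u₂) :
    (u₂ * Jmat F r * Yᵀ).IsLowerTriangular := by
  have hJ : (Jmat F r)ᵀ * Jmat F r = 1 := mul_eq_one_comm.1 (Jmat_mul_transpose F r)
  have hdiag : diagonal d * (u₂ * Jmat F r * Yᵀ) = (Jmat F r)ᵀ * u₁⁻¹ * Jmat F r := by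
    calc diagonal d * (u₂ * Jmat F r * Yᵀ)
        = (Jmat F r)ᵀ * u₁⁻¹ * (u₁ * Jmat F r * diagonal d * u₂) * (Jmat F r * Yᵀ) := by
          simp only [Matrix.mul_assoc, nonsing_inv_mul_cancel_left _ _ hu₁']
          rw [← Matrix.mul_assoc (Jmat F r)ᵀ, hJ, Matrix.one_mul]
      _ = (Jmat F r)ᵀ * u₁⁻¹ * Jmat F r := by
          rw [← h, Matrix.mul_assoc _ (theta F r Y), theta_mul_Jmat_mul_transpose hY]
  have hinv : diagonal d⁻¹ * diagonal d = 1 := by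
    rw [diagonal_mul_diagonal, ← diagonal_one]
    exact congrArg diagonal (funext fun i => inv_mul_cancel₀ (hd i))
  rw [← Matrix.one_mul (u₂ * _ * _), ← hinv, Matrix.mul_assoc, hdiag]
  have : Invertible u₁ := invertibleOfIsUnitDet u₁ hu₁'
  exact (blockTriangular_diagonal _).mul
    (isLowerTriangular_transpose_Jmat_mul_mul_Jmat (blockTriangular_inv_of_blockTriangular hu₁))

def nullVector {n : ℕ} (A : Matrix (Fin n) (Fin (n + 1)) F) : Fin (n + 1) → F :=
  fun c => (-1) ^ (c : ℕ) * (A.submatrix id c.succAbove).det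

theorem mulVec_nullVector {n : ℕ} (A : Matrix (Fin n) (Fin (n + 1)) F) :
    A *ᵥ nullVector A = 0 := by
  ext a
  -- `A` with its row `a` repeated on top is singular; expand its determinant along that row.
  have hdet : (of (Fin.cons (A a) A : Fin (n + 1) → Fin (n + 1) → F)).det = 0 :=
    det_zero_of_row_eq (Fin.succ_ne_zero a).symm rfl
  have hminor : ∀ c : Fin (n + 1), (of (Fin.cons (A a) A)).submatrix Fin.succ c.succAbove =
      A.submatrix id c.succAbove := fun _ => rfl
  have hrow : ∀ c, of (Fin.cons (A a) A : Fin (n + 1) → Fin (n + 1) → F) 0 c = A a c :=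
    fun _ => rfl
  rw [det_succ_row_zero] at hdet
  simpa [mulVec, dotProduct, nullVector, hminor, hrow, mul_left_comm, mul_assoc] using hdet

theorem nullVector_last {n : ℕ} (A : Matrix (Fin n) (Fin (n + 1)) F) :
    nullVector A (Fin.last n) = (-1) ^ n * (A.submatrix id Fin.castSucc).det := by
  rw [nullVector, Fin.val_last, Fin.succAbove_last]

theorem eq_zero_of_mulVec_eq_zero_of_apply_last_eq_zero {n : ℕ}
    {A : Matrix (Fin n) (Fin (n + 1)) F} (hA : IsUnit (A.submatrix id Fin.castSucc).det)
    {x : Fin (n + 1) → F} (hx : A *ᵥ x = 0) (hlast : x (Fin.last n) = 0) : x = 0 := by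
  have hinit : A.submatrix id Fin.castSucc *ᵥ (x ∘ Fin.castSucc) = 0 := by
    ext a
    have := congrFun hx a
    simpa [mulVec, dotProduct, Fin.sum_univ_castSucc, hlast] using this
  have hinit0 : x ∘ Fin.castSucc = 0 :=
    mulVec_injective_iff_isUnit.2 ((isUnit_iff_isUnit_det _).2 hA)
      (hinit.trans (mulVec_zero _).symm)
  ext c
  exact Fin.lastCases hlast (fun c => congrFun hinit0 c) c

theorem smul_eq_smul_nullVector_of_mulVec_eq_zero {n : ℕ} {A : Matrix (Fin n) (Fin (n + 1)) F}
    (hA : IsUnit (A.submatrix id Fin.castSucc).det) {v : Fin (n + 1) → F} (hv : A *ᵥ v = 0) :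
    nullVector A (Fin.last n) • v = v (Fin.last n) • nullVector A := by
  rw [← sub_eq_zero]
  refine eq_zero_of_mulVec_eq_zero_of_apply_last_eq_zero hA ?_ ?_
  · rw [mulVec_sub, mulVec_smul, mulVec_smul, hv, mulVec_nullVector, smul_zero, smul_zero,
      sub_zero]
  · simp [mul_comm]

theorem UTU.isUpperTriangular {k : ℕ} {u : Matrix (Fin k) (Fin k) F} (hu : UTU F u) :
    u.IsUpperTriangular :=
  fun _ _ h => hu.2 _ _ h

theorem UTU.det_eq_one {k : ℕ} {u : Matrix (Fin k) (Fin k) F} (hu : UTU F u) : u.det = 1 := by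
  rw [det_of_isUpperTriangular hu.isUpperTriangular]
  exact Finset.prod_eq_one fun i _ => hu.1 i

theorem llCorner_self {α : Type*} {r : ℕ} (Y : Matrix (Fin r) (Fin r) α) :
    llCorner α r Y r le_rfl = Y := by
  ext a b
  simp [llCorner]

def lowerLeftBlock {α : Type*} {r : ℕ} (Y : Matrix (Fin r) (Fin r) α) (i : ℕ) (hi : 1 ≤ i)
    (hir : i ≤ r) : Matrix (Fin (r - i)) (Fin (r - i + 1)) α :=
  of fun a c => Y ⟨i + a, by omega⟩ ⟨c, by omega⟩

theorem lowerLeftBlock_submatrix_castSucc {α : Type*} {r : ℕ} (Y : Matrix (Fin r) (Fin r) α)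
    {i : ℕ} (hi : 1 ≤ i) (hir : i ≤ r) :
    (lowerLeftBlock Y i hi hir).submatrix id Fin.castSucc = llCorner α r Y (r - i) (by omega) := by
  ext a b
  simp only [lowerLeftBlock, llCorner, submatrix_apply, of_apply, id, Fin.val_castSucc]
  congr 2
  omega

theorem lowerLeftBlock_submatrix_succAbove {α : Type*} {r : ℕ} (Y : Matrix (Fin r) (Fin r) α)
    {i j : ℕ} (hi : 1 ≤ i) (hij : i < j) (hj : j ≤ r) :
    (lowerLeftBlock Y i hi (by omega)).submatrix id (Fin.succAbove ⟨r - j, by omega⟩) =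
      subDelCol α r Y i j hi hij hj := by
  ext a b
  simp only [lowerLeftBlock, subDelCol, submatrix_apply, of_apply, id]
  split_ifs with hb <;> congr 1 <;> ext <;> simp [Fin.succAbove, Fin.lt_def, hb]

theorem lowerLeftBlock_mulVec_eq_zero {r : ℕ} {Y u : Matrix (Fin r) (Fin r) F} {i : ℕ}
    (hi : 1 ≤ i) (hir : i ≤ r) (hu : u.IsUpperTriangular)
    (hL : (u * Jmat F r * Yᵀ).IsLowerTriangular) :
    lowerLeftBlock Y i hi hir *ᵥ
      (fun c => (u * Jmat F r) ⟨i - 1, by omega⟩ (Fin.castLE (by omega) c)) = 0 := by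
  ext a
  have hsupp : ∀ k : Fin r, r - i + 1 ≤ (k : ℕ) →
      Y ⟨i + a, by omega⟩ k * (u * Jmat F r) ⟨i - 1, by omega⟩ k = 0 := by
    intro k hk
    have hzero : u ⟨i - 1, by omega⟩ k.rev = 0 := hu (show k.rev < ⟨i - 1, _⟩ by
      simp only [Fin.lt_def, Fin.val_rev]; omega)
    rw [mul_Jmat_apply, hzero, mul_zero, mul_zero]
  have hrow := hL (i := ⟨i - 1, by omega⟩) (j := ⟨i + a, by omega⟩)
    (OrderDual.toDual_lt_toDual.2 (by simp only [Fin.lt_def]; omega))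
  rw [mul_apply, Fin.sum_univ_eq_sum_castLE (m := r - i + 1) (by omega) _ fun k hk => by
    rw [transpose_apply, mul_comm]; exact hsupp k hk] at hrow
  exact (Finset.sum_congr rfl fun c _ => mul_comm _ _).trans hrow

end

/-- Explicit second unipotent factor of the Bruhat decomposition. -/
theorem bruhat_second_unipotent (r : ℕ) (Y : Matrix (Fin r) (Fin r) F)
    (hY : ∀ (i : ℕ) (h1 : 1 ≤ i) (h2 : i ≤ r), (llCorner F r Y i h2).det ≠ 0)
    (u1 u2 : Matrix (Fin r) (Fin r) F) (d : Fin r → F)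
    (hu1 : UTU F u1) (hu2 : UTU F u2) (hd : ∀ i, d i ≠ 0)
    (hdec : theta F r Y = u1 * Jmat F r * Matrix.diagonal d * u2) :
    ∀ (i j : ℕ) (h1 : 1 ≤ i) (hij : i < j) (hj : j ≤ r),
      u2 ⟨i - 1, by omega⟩ ⟨j - 1, by omega⟩ =
        (subDelCol F r Y i j h1 hij hj).det /
          (llCorner F r Y (r - i) (by omega)).det := by
  intro i j h1 hij hj
  have hYdet : IsUnit Y.det := by
    simpa [llCorner_self] using (hY r (by omega) le_rfl).isUnit
  have hL := isLowerTriangular_mul_Jmat_mul_transpose_of_theta_eq hYdet hu1.isUpperTriangular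
    (by simp [hu1.det_eq_one]) hd hdec
  have hB := hY (r - i) (by omega) (by omega)
  have key := congrFun (smul_eq_smul_nullVector_of_mulVec_eq_zero
    (by rw [lowerLeftBlock_submatrix_castSucc]; exact hB.isUnit)
    (lowerLeftBlock_mulVec_eq_zero h1 (by omega) hu2.isUpperTriangular hL)) ⟨r - j, by omega⟩
  have hdiag : (Fin.castLE (by omega) (Fin.last (r - i)) : Fin r).rev = ⟨i - 1, by omega⟩ :=
    Fin.ext (by simp only [Fin.val_rev, Fin.val_castLE, Fin.val_last]; omega)
  have hcol : (Fin.castLE (by omega) (⟨r - j, by omega⟩ : Fin (r - i + 1)) : Fin r).rev =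
      ⟨j - 1, by omega⟩ :=
    Fin.ext (by simp only [Fin.val_rev, Fin.val_castLE]; omega)
  rw [nullVector_last, lowerLeftBlock_submatrix_castSucc] at key
  simp only [nullVector, Pi.smul_apply, smul_eq_mul, mul_Jmat_apply, hdiag, hcol, hu2.1,
    mul_one] at key
  rw [lowerLeftBlock_submatrix_succAbove Y h1 hij hj] at key
  have hsign : (-1 : F) ^ (i - 1) * (-1) ^ (r - j) = (-1) ^ (r - i) * (-1) ^ (j - 1) := by
    rw [← pow_add, ← pow_add, show r - i + (j - 1) = i - 1 + (r - j) + 2 * (j - i) by omega,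
      pow_add _ (i - 1 + (r - j)), pow_mul, neg_one_sq, one_pow, mul_one]
  rw [eq_div_iff hB]
  refine mul_left_cancel₀ (pow_ne_zero (r - i + (j - 1)) (neg_ne_zero.2 one_ne_zero)) ?_
  rw [pow_add]
  linear_combination key + (subDelCol F r Y i j h1 hij hj).det * hsign

end RS
end

section
/- Invariance of the Bessel coordinate: let X be an r×2m matrix over F, let Y ∈ GL_r(F), and let u_1 ∈ GL_r(F) and u_2 ∈ GL_{2m}(F) be upper-triangular unipotent. Then the (r,1) entry of (u_1^{-1} Y θ_r(u_1))^{-1} · (u_1^{-1} X u_2) equals the (r,1) entry of Y^{-1} X. -/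
open Matrix

namespace RS

variable (F : Type*) [Field F]

/-- Explicit inverse of `Jmat`. -/
def Jinv (r : ℕ) : Matrix (Fin r) (Fin r) F :=
  Matrix.of fun i j => if (i : ℕ) + (j : ℕ) = r - 1 then (-1 : F) ^ (j : ℕ) else 0

lemma dot_left_single {n : ℕ} (v w : Fin n → F) (i0 : Fin n)
    (h : ∀ k, k ≠ i0 → v k = 0) : ∑ k, v k * w k = v i0 * w i0 :=
  Finset.sum_eq_single_of_mem i0 (Finset.mem_univ _)
    (fun b _ hb => by rw [h b hb, zero_mul])

lemma dot_right_single {n : ℕ} (v w : Fin n → F) (i0 : Fin n)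
    (h : ∀ k, k ≠ i0 → w k = 0) : ∑ k, v k * w k = v i0 * w i0 :=
  Finset.sum_eq_single_of_mem i0 (Finset.mem_univ _)
    (fun b _ hb => by rw [h b hb, mul_zero])

lemma Jmat_mul_Jinv (r : ℕ) : Jmat F r * Jinv F r = 1 := by
  ext i j
  have hi := i.isLt
  have hj := j.isLt
  rw [Matrix.mul_apply,
    dot_left_single F _ _ (⟨r - 1 - (i : ℕ), by omega⟩ : Fin r)
      (fun k hk => by
        simp only [Jmat, Matrix.of_apply, ite_eq_right_iff]
        intro h
        exact absurd (Fin.ext (by omega : (k : ℕ) = r - 1 - (i : ℕ))) hk)]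
  simp only [Jmat, Jinv, Matrix.of_apply, Matrix.one_apply]
  rcases eq_or_ne i j with h | h
  · subst h
    rw [if_pos (by omega), if_pos (by omega), if_pos rfl, ← pow_add]
    exact Even.neg_one_pow ⟨(i : ℕ), rfl⟩
  · rw [if_pos (by omega), if_neg (by
      intro hc
      exact h (Fin.ext (by omega))), mul_zero, if_neg h]

lemma Jinv_mul_Jmat (r : ℕ) : Jinv F r * Jmat F r = 1 := by
  ext i j
  have hi := i.isLt
  have hj := j.isLt
  rw [Matrix.mul_apply,
    dot_left_single F _ _ (⟨r - 1 - (i : ℕ), by omega⟩ : Fin r)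
      (fun k hk => by
        simp only [Jinv, Matrix.of_apply, ite_eq_right_iff]
        intro h
        exact absurd (Fin.ext (by omega : (k : ℕ) = r - 1 - (i : ℕ))) hk)]
  simp only [Jmat, Jinv, Matrix.of_apply, Matrix.one_apply]
  rcases eq_or_ne i j with h | h
  · subst h
    rw [if_pos (by omega), if_pos (by omega), ← pow_add, if_pos rfl]
    exact Even.neg_one_pow ⟨r - 1 - (i : ℕ), rfl⟩
  · rw [if_pos (by omega), if_neg (by
      intro hc
      exact h (Fin.ext (by omega))), mul_zero, if_neg h]

lemma utu_isUnit_det {k : ℕ} (u : Matrix (Fin k) (Fin k) F) (hu : UTU F u) :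
    IsUnit u.det := by
  have : u.det = 1 := by
    rw [Matrix.det_of_upperTriangular (fun i j hij => hu.2 i j hij)]
    exact Finset.prod_eq_one fun i _ => hu.1 i
  rw [this]; exact isUnit_one

lemma utu_col0 {k : ℕ} (u : Matrix (Fin k) (Fin k) F) (hu : UTU F u) (hk : 0 < k)
    (l : Fin k) (hl : l ≠ ⟨0, hk⟩) : u l ⟨0, hk⟩ = 0 :=
  hu.2 l ⟨0, hk⟩ (by
    have h1 : (l : ℕ) ≠ 0 := fun h => hl (Fin.ext h)
    have h2 : ((⟨0, hk⟩ : Fin k) : ℕ) = 0 := rfl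
    omega)

/-- Invariance of the Bessel coordinate. -/
theorem bessel_coordinate_invariance (r m : ℕ) (hr : 1 ≤ r) (hm : 1 ≤ m)
    (X : Matrix (Fin r) (Fin (m + m)) F) (Y : Matrix (Fin r) (Fin r) F) (hY : IsUnit Y)
    (u1 : Matrix (Fin r) (Fin r) F) (u2 : Matrix (Fin (m + m)) (Fin (m + m)) F)
    (hu1 : UTU F u1) (hu2 : UTU F u2) :
    ((u1⁻¹ * Y * theta F r u1)⁻¹ * (u1⁻¹ * X * u2)) ⟨r - 1, by omega⟩ ⟨0, by omega⟩ =
      (Y⁻¹ * X) ⟨r - 1, by omega⟩ ⟨0, by omega⟩ := by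
  have hr0 : 0 < r := hr
  have hm0 : 0 < m + m := by omega
  have hu1det : IsUnit u1.det := utu_isUnit_det F u1 hu1
  have hJ : (Jmat F r)⁻¹ = Jinv F r := Matrix.inv_eq_right_inv (Jmat_mul_Jinv F r)
  have hJJ : (Jinv F r)⁻¹ = Jmat F r := Matrix.inv_eq_right_inv (Jinv_mul_Jmat F r)
  have hu1inv : (u1⁻¹)⁻¹ = u1 := Matrix.nonsing_inv_nonsing_inv _ hu1det
  have hθ : (theta F r u1)⁻¹ = Jmat F r * u1ᵀ * Jinv F r := by
    rw [theta, Matrix.mul_inv_rev, Matrix.mul_inv_rev, hJ, hJJ,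
      ← Matrix.transpose_nonsing_inv, hu1inv, ← Matrix.mul_assoc]
  have key : (u1⁻¹ * Y * theta F r u1)⁻¹ * (u1⁻¹ * X * u2) =
      Jmat F r * (u1ᵀ * (Jinv F r * (Y⁻¹ * (X * u2)))) := by
    rw [Matrix.mul_inv_rev, Matrix.mul_inv_rev, hθ, hu1inv]
    simp only [Matrix.mul_assoc]
    rw [Matrix.mul_nonsing_inv_cancel_left _ _ hu1det]
  rw [key]
  -- peel off Jmat on the left
  rw [Matrix.mul_apply,
    dot_left_single F _ _ (⟨0, hr0⟩ : Fin r)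
      (fun k hk => by
        simp only [Jmat, Matrix.of_apply, ite_eq_right_iff]
        intro h
        have := k.isLt
        exact absurd (Fin.ext (by omega : (k : ℕ) = 0)) hk)]
  have hJentry : Jmat F r ⟨r - 1, by omega⟩ ⟨0, hr0⟩ = (-1 : F) ^ (r - 1) := by
    simp [Jmat]
  rw [hJentry]
  -- peel off u1ᵀ
  rw [Matrix.mul_apply,
    dot_left_single F _ _ (⟨0, hr0⟩ : Fin r)
      (fun k hk => by
        show u1ᵀ _ _ = 0
        rw [Matrix.transpose_apply]
        exact utu_col0 F u1 hu1 hr0 k hk),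
    Matrix.transpose_apply, hu1.1 ⟨0, hr0⟩, one_mul]
  -- peel off Jinv
  rw [Matrix.mul_apply,
    dot_left_single F _ _ (⟨r - 1, by omega⟩ : Fin r)
      (fun k hk => by
        simp only [Jinv, Matrix.of_apply, ite_eq_right_iff]
        intro h
        have := k.isLt
        exact absurd (Fin.ext (by omega : (k : ℕ) = r - 1)) hk)]
  have hJinventry : Jinv F r ⟨0, hr0⟩ ⟨r - 1, by omega⟩ = (-1 : F) ^ (r - 1) := by
    simp [Jinv]
  rw [hJinventry, ← mul_assoc, ← pow_add,
    Even.neg_one_pow ⟨r - 1, rfl⟩, one_mul]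
  -- peel off u2 on the right
  rw [← Matrix.mul_assoc, Matrix.mul_apply,
    dot_right_single F _ _ (⟨0, hm0⟩ : Fin (m + m))
      (fun k hk => utu_col0 F u2 hu2 hm0 k hk),
    hu2.1 ⟨0, hm0⟩, mul_one]

end RS
end
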